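/- arXiv:2202.12192 — 4 statements merged into one kernel-verified Lean document; each statement's English description precedes it below -/
import Mathlib

section
/- Let α ∈ (0,1), T > 0, C > 0, and let u : [0,T] → L²(Ω) satisfy ‖∂_t u(t)‖ ≤ C t^{α-1} for t ∈ (0,T] (u continuously differentiable on (0,T]). Then for each t ∈ (0,T], ∫₀ᵗ ‖u(t) - u(τ)‖² / (t-τ)^{α+2} dτ ≤ C' t^{α-1} for some constant C' depending only on C and α. -/
/-!
By the mean value inequality against the boundary functions `C/α · (x^α - τ^α)` and
`C τ^(α-1) (x - τ)`, the increment satisfies `‖u t - u τ‖ ≤ C/α · (t - τ)^α` (subadditivity of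
`x ↦ x^α`) and `‖u t - u τ‖ ≤ C τ^(α-1) (t - τ)`. For `τ ≤ t/2` the first bound makes the integrand
at most `(C/α)² (t/2)^(α-2)`, for `τ ≥ t/2` the second makes it at most
`C² (t/2)^(2α-2) (t - τ)^(-α)`, which is integrable because `α < 1`. Both integrate over `(0, t)`
to multiples of `t^(α-1)`.
-/

open MeasureTheory Set

section IncrementBounds

variable {E : Type*} [NormedAddCommGroup E] [NormedSpace ℝ E] {u : ℝ → E} {α C τ t : ℝ}

theorem norm_sub_le_div_mul_rpow_sub_rpow (hα : α ≠ 0) (hτ : 0 < τ) (hτt : τ ≤ t)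
    (hu : ∀ s ∈ Icc τ t, DifferentiableAt ℝ u s)
    (hbound : ∀ s ∈ Icc τ t, ‖deriv u s‖ ≤ C * s ^ (α - 1)) :
    ‖u t - u τ‖ ≤ C / α * (t ^ α - τ ^ α) := by
  have hB : ∀ s ∈ Icc τ t,
      HasDerivAt (fun x => C / α * (x ^ α - τ ^ α)) (C * s ^ (α - 1)) s := fun s hs => by
    refine (((Real.hasDerivAt_rpow_const (Or.inl (hτ.trans_le hs.1).ne')).sub_const
      (τ ^ α)).const_mul (C / α)).congr_deriv ?_
    field_simp
  refine image_norm_le_of_norm_deriv_right_le_deriv_boundary' (f := fun x => u x - u τ)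
    (fun s hs => ((hu s hs).continuousAt.sub continuousAt_const).continuousWithinAt)
    (fun s hs => ((hu s (Ico_subset_Icc_self hs)).hasDerivAt.sub_const (u τ)).hasDerivWithinAt)
    (by simp) (fun s hs => (hB s hs).continuousAt.continuousWithinAt)
    (fun s hs => (hB s (Ico_subset_Icc_self hs)).hasDerivWithinAt)
    (fun s hs => hbound s (Ico_subset_Icc_self hs)) (right_mem_Icc.2 hτt)

theorem norm_sub_le_mul_rpow_mul_sub (hα : α ≤ 1) (hC : 0 ≤ C) (hτ : 0 < τ) (hτt : τ ≤ t)
    (hu : ∀ s ∈ Icc τ t, DifferentiableAt ℝ u s)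
    (hbound : ∀ s ∈ Icc τ t, ‖deriv u s‖ ≤ C * s ^ (α - 1)) :
    ‖u t - u τ‖ ≤ C * τ ^ (α - 1) * (t - τ) :=
  norm_image_sub_le_of_norm_deriv_le_segment' (fun s hs => (hu s hs).hasDerivAt.hasDerivWithinAt)
    (fun s hs => (hbound s (Ico_subset_Icc_self hs)).trans <| mul_le_mul_of_nonneg_left
      (Real.rpow_le_rpow_of_nonpos hτ hs.1 (by linarith)) hC) t (right_mem_Icc.2 hτt)

end IncrementBounds

section SingularKernel

variable {β t : ℝ}

theorem intervalIntegrable_sub_rpow (hβ : -1 < β) :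
    IntervalIntegrable (fun τ => (t - τ) ^ β) volume 0 t := by
  simpa using
    ((intervalIntegral.intervalIntegrable_rpow' (a := 0) (b := t) hβ).comp_sub_left t).symm

theorem integrableOn_Ioo_sub_rpow (hβ : -1 < β) :
    IntegrableOn (fun τ => (t - τ) ^ β) (Ioo 0 t) :=
  (intervalIntegrable_sub_rpow hβ).1.mono_set Ioo_subset_Ioc_self

theorem integral_Ioo_sub_rpow (hβ : -1 < β) (ht : 0 ≤ t) :
    ∫ τ in Ioo 0 t, (t - τ) ^ β = t ^ (β + 1) / (β + 1) := by
  rw [← integral_Ioc_eq_integral_Ioo, ← intervalIntegral.integral_of_le ht,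
    intervalIntegral.integral_comp_sub_left (fun x => x ^ β), sub_self, sub_zero,
    integral_rpow (Or.inl hβ), Real.zero_rpow (by linarith), sub_zero]

theorem half_rpow_mul_rpow (ht : 0 < t) (γ : ℝ) :
    (t / 2) ^ β * t ^ γ = 2 ^ (-β) * t ^ (β + γ) := by
  rw [Real.div_rpow ht.le zero_le_two, Real.rpow_neg zero_le_two, Real.rpow_add ht]
  ring

end SingularKernel

section Majorant

variable {d s t τ α K L : ℝ}

theorem sq_div_rpow_add_two_le_of_le_mul_rpow (hs : 0 < s) (hd : 0 ≤ d) (h : d ≤ K * s ^ α) :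
    d ^ 2 / s ^ (α + 2) ≤ K ^ 2 * s ^ (α - 2) := by
  have hsplit : s ^ (α - 2) * s ^ (α + 2) = (s ^ α) ^ 2 := by
    rw [← Real.rpow_add hs, ← Real.rpow_mul_natCast hs.le]
    ring_nf
  rw [div_le_iff₀ (Real.rpow_pos_of_pos hs _), mul_assoc, hsplit, ← mul_pow]
  exact pow_le_pow_left₀ hd h 2

theorem sq_div_rpow_add_two_le_of_le_mul (hs : 0 < s) (hd : 0 ≤ d) (h : d ≤ K * s) :
    d ^ 2 / s ^ (α + 2) ≤ K ^ 2 * s ^ (-α) := by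
  have hsplit : s ^ (-α) * s ^ (α + 2) = s ^ 2 := by
    rw [← Real.rpow_add hs, neg_add_cancel_left, Real.rpow_two]
  rw [div_le_iff₀ (Real.rpow_pos_of_pos hs _), mul_assoc, hsplit, ← mul_pow]
  exact pow_le_pow_left₀ hd h 2

noncomputable def singularMajorant (K L α t τ : ℝ) : ℝ :=
  K ^ 2 * (t / 2) ^ (α - 2) + L ^ 2 * (t / 2) ^ (2 * α - 2) * (t - τ) ^ (-α)

theorem sq_div_rpow_le_singularMajorant (hα : α ∈ Icc 0 1) (hK : 0 ≤ K) (hτ : 0 < τ)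
    (hτt : τ < t) (hd : 0 ≤ d) (hHolder : d ≤ K * (t ^ α - τ ^ α))
    (hLipschitz : d ≤ L * τ ^ (α - 1) * (t - τ)) :
    d ^ 2 / (t - τ) ^ (α + 2) ≤ singularMajorant K L α t τ := by
  obtain ⟨hα0, hα1⟩ := hα
  have htτ : 0 < t - τ := sub_pos.2 hτt
  have ht2 : 0 < t / 2 := by linarith
  rcases le_or_gt τ (t / 2) with hτ_le | hτ_gt
  · have hsubadd : t ^ α - τ ^ α ≤ (t - τ) ^ α := by
      have := Real.rpow_add_le_add_rpow htτ.le hτ.le hα0 hα1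
      rw [sub_add_cancel] at this
      linarith
    have hdist : (t - τ) ^ (α - 2) ≤ (t / 2) ^ (α - 2) :=
      Real.rpow_le_rpow_of_nonpos ht2 (by linarith) (by linarith)
    calc d ^ 2 / (t - τ) ^ (α + 2) ≤ K ^ 2 * (t - τ) ^ (α - 2) :=
          sq_div_rpow_add_two_le_of_le_mul_rpow htτ hd
            (hHolder.trans (mul_le_mul_of_nonneg_left hsubadd hK))
      _ ≤ K ^ 2 * (t / 2) ^ (α - 2) := by gcongr
      _ ≤ _ := le_add_of_nonneg_right (by positivity)
  · have hdist : (τ ^ (α - 1)) ^ 2 ≤ (t / 2) ^ (2 * α - 2) := by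
      rw [← Real.rpow_mul_natCast hτ.le, show (α - 1) * (2 : ℕ) = 2 * α - 2 by push_cast; ring]
      exact Real.rpow_le_rpow_of_nonpos ht2 hτ_gt.le (by linarith)
    calc d ^ 2 / (t - τ) ^ (α + 2) ≤ (L * τ ^ (α - 1)) ^ 2 * (t - τ) ^ (-α) :=
          sq_div_rpow_add_two_le_of_le_mul htτ hd (by rwa [mul_assoc] at hLipschitz ⊢)
      _ ≤ L ^ 2 * (t / 2) ^ (2 * α - 2) * (t - τ) ^ (-α) := by rw [mul_pow]; gcongr
      _ ≤ _ := le_add_of_nonneg_left (by positivity)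

theorem integrableOn_singularMajorant (hα : α < 1) :
    IntegrableOn (singularMajorant K L α t) (Ioo 0 t) :=
  (integrableOn_const measure_Ioo_lt_top.ne).add
    ((integrableOn_Ioo_sub_rpow (by linarith)).const_mul _)

theorem integral_singularMajorant (hα : α < 1) (ht : 0 < t) :
    ∫ τ in Ioo 0 t, singularMajorant K L α t τ
      = (K ^ 2 * 2 ^ (2 - α) + L ^ 2 * 2 ^ (2 - 2 * α) / (1 - α)) * t ^ (α - 1) := by
  have hβ : -1 < -α := by linarith
  have hconst : IntegrableOn (fun _ => K ^ 2 * (t / 2) ^ (α - 2)) (Ioo 0 t) :=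
    integrableOn_const measure_Ioo_lt_top.ne
  unfold singularMajorant
  rw [integral_add hconst ((integrableOn_Ioo_sub_rpow hβ).const_mul _), setIntegral_const,
    integral_const_mul, integral_Ioo_sub_rpow hβ ht.le, Real.volume_real_Ioo_of_le ht.le,
    sub_zero, smul_eq_mul]
  calc _ = K ^ 2 * ((t / 2) ^ (α - 2) * t ^ (1 : ℝ))
        + L ^ 2 * ((t / 2) ^ (2 * α - 2) * t ^ (1 - α)) / (1 - α) := by
        rw [Real.rpow_one, neg_add_eq_sub]; ring
    _ = _ := by rw [half_rpow_mul_rpow ht, half_rpow_mul_rpow ht]; ring_nf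

end Majorant

theorem singular_integral_bound_general
    {H : Type*} [NormedAddCommGroup H] [InnerProductSpace ℝ H]
    (α T C : ℝ) (hα : α ∈ Set.Ioo (0:ℝ) 1) (hC : 0 < C)
    (u : ℝ → H)
    (hu : ∀ s ∈ Set.Ioc (0:ℝ) T, DifferentiableAt ℝ u s)
    (hbound : ∀ s ∈ Set.Ioc (0:ℝ) T, ‖deriv u s‖ ≤ C * s ^ (α - 1)) :
    ∃ C' : ℝ, 0 < C' ∧ ∀ t ∈ Set.Ioc (0:ℝ) T,
      ∫ τ in Set.Ioo (0:ℝ) t, ‖u t - u τ‖ ^ 2 / (t - τ) ^ (α + 2)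
        ≤ C' * t ^ (α - 1) := by
  obtain ⟨hα0, hα1⟩ := hα
  refine ⟨(C / α) ^ 2 * 2 ^ (2 - α) + C ^ 2 * 2 ^ (2 - 2 * α) / (1 - α),
    by have := sub_pos.2 hα1; positivity, fun t ⟨ht0, htT⟩ => ?_⟩
  have hdominated : ∀ τ ∈ Ioo 0 t,
      ‖u t - u τ‖ ^ 2 / (t - τ) ^ (α + 2) ≤ singularMajorant (C / α) C α t τ := by
    rintro τ ⟨hτ0, hτt⟩
    have hsub : Icc τ t ⊆ Ioc 0 T := fun s hs => ⟨hτ0.trans_le hs.1, hs.2.trans htT⟩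
    have hu' := fun s hs => hu s (hsub hs)
    have hbound' := fun s hs => hbound s (hsub hs)
    exact sq_div_rpow_le_singularMajorant ⟨hα0.le, hα1.le⟩ (by positivity) hτ0 hτt (norm_nonneg _)
      (norm_sub_le_div_mul_rpow_sub_rpow hα0.ne' hτ0 hτt.le hu' hbound')
      (norm_sub_le_mul_rpow_mul_sub hα1.le hC.le hτ0 hτt.le hu' hbound')
  calc _ ≤ ∫ τ in Ioo 0 t, singularMajorant (C / α) C α t τ :=
        setIntegral_mono_of_nonneg (fun τ hτ => by have := sub_pos.2 hτ.2; positivity)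
          hdominated (integrableOn_singularMajorant hα1)
    _ = _ := integral_singularMajorant hα1 ht0

theorem singular_integral_bound
    {H : Type*} [NormedAddCommGroup H] [InnerProductSpace ℝ H] [CompleteSpace H]
    (α T C : ℝ) (hα : α ∈ Set.Ioo (0:ℝ) 1) (hT : 0 < T) (hC : 0 < C)
    (u : ℝ → H)
    (hu : ∀ s ∈ Set.Ioc (0:ℝ) T, DifferentiableAt ℝ u s)
    (hbound : ∀ s ∈ Set.Ioc (0:ℝ) T, ‖deriv u s‖ ≤ C * s ^ (α - 1)) :
    ∃ C' : ℝ, 0 < C' ∧ ∀ t ∈ Set.Ioc (0:ℝ) T,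
      ∫ τ in Set.Ioo (0:ℝ) t, ‖u t - u τ‖ ^ 2 / (t - τ) ^ (α + 2)
        ≤ C' * t ^ (α - 1) :=
  singular_integral_bound_general α T C hα hC u hu hbound
end

section
/- Let H be a Hilbert space, α ∈ (0,1), and v : [0,∞) → H continuous with: (i) ‖v(t)‖ ≤ M for all t; (ii) ‖v(t) - v(τ)‖ ≤ C|t-τ|^α for all t,τ ≥ 0; (iii) v(t) → v_∞ in H as t → ∞ for some v_∞ ∈ H. Then ∫₀ᵗ ‖v(t) - v(τ)‖² / (t-τ)^{α+1} dτ → 0 as t → ∞. -/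
/-!
After the substitution `τ = t - s` the memory term is `∫₀ᵗ ‖v t - v (t - s)‖² / s ^ (α + 1) ds`.
For fixed `s` the integrand tends to `0`, because `v t` and `v (t - s)` both tend to `v_∞`.
Uniformly in `t` it is dominated by `C² s ^ (α - 1)` on `(0, 1]` (Hölder continuity) and by
`4 M² s ^ (-(α + 1))` on `(1, ∞)` (boundedness), an integrable majorant since `α > 0`,
so dominated convergence applies.
-/

open MeasureTheory Filter Set Topology

theorem setIntegral_Ioo_comp_sub_left {E : Type*} [NormedAddCommGroup E] [NormedSpace ℝ E]
    (f : ℝ → E) {a b : ℝ} (hab : a ≤ b) :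
    ∫ x in Ioo a b, f (b - x) = ∫ x in Ioc 0 (b - a), f x := by
  rw [← integral_Ioc_eq_integral_Ioo, ← intervalIntegral.integral_of_le hab,
    intervalIntegral.integral_comp_sub_left, sub_self,
    intervalIntegral.integral_of_le (sub_nonneg.2 hab)]

theorem sq_div_rpow_le_of_le_mul_rpow {a C s α : ℝ} (ha : 0 ≤ a) (hs : 0 < s)
    (h : a ≤ C * s ^ α) : a ^ 2 / s ^ (α + 1) ≤ C ^ 2 * s ^ (α - 1) := by
  have hsq : a ^ 2 ≤ C ^ 2 * s ^ (α + α) := by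
    rw [Real.rpow_add hs, ← sq, ← mul_pow]
    exact pow_le_pow_left₀ ha h 2
  calc a ^ 2 / s ^ (α + 1) ≤ C ^ 2 * s ^ (α + α) / s ^ (α + 1) := by gcongr
    _ = C ^ 2 * s ^ (α - 1) := by
      rw [mul_div_assoc, ← Real.rpow_sub hs]
      ring_nf

theorem sq_div_rpow_le_of_le {a K s β : ℝ} (ha : 0 ≤ a) (hs : 0 < s) (h : a ≤ K) :
    a ^ 2 / s ^ β ≤ K ^ 2 * s ^ (-β) := by
  rw [Real.rpow_neg hs.le, ← div_eq_mul_inv]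
  gcongr

theorem Filter.Tendsto.sub_comp_sub_const {G : Type*} [AddCommGroup G] [TopologicalSpace G]
    [IsTopologicalAddGroup G] {v : ℝ → G} {a : G} (hv : Tendsto v atTop (𝓝 a)) (s : ℝ) :
    Tendsto (fun t => v t - v (t - s)) atTop (𝓝 0) := by
  simpa [sub_eq_add_neg, Function.comp_def] using
    hv.sub (hv.comp (tendsto_atTop_add_const_right _ (-s) tendsto_id))

noncomputable def memoryKernelMajorant (α M C : ℝ) (s : ℝ) : ℝ :=
  (Ioc 0 1).indicator (fun s => C ^ 2 * s ^ (α - 1)) s +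
    (Ioi 1).indicator (fun s => (2 * M) ^ 2 * s ^ (-(α + 1))) s

theorem integrable_memoryKernelMajorant {α : ℝ} (hα : 0 < α) (M C : ℝ) :
    Integrable (memoryKernelMajorant α M C) := by
  refine Integrable.add ?_ ?_
  · refine IntegrableOn.integrable_indicator ?_ measurableSet_Ioc
    refine ((intervalIntegrable_iff_integrableOn_Ioc_of_le zero_le_one).1 ?_)
    exact (intervalIntegral.intervalIntegrable_rpow' (by linarith)).const_mul _
  · refine IntegrableOn.integrable_indicator ?_ measurableSet_Ioi
    exact (integrableOn_Ioi_rpow_of_lt (by linarith) zero_lt_one).const_mul _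

theorem memoryKernelMajorant_nonneg (α M C s : ℝ) : 0 ≤ memoryKernelMajorant α M C s :=
  add_nonneg (indicator_nonneg (fun s hs => by have := hs.1; positivity) s)
    (indicator_nonneg (fun s hs => by have : 0 < s := zero_lt_one.trans hs; positivity) s)

section MemoryKernel

variable {E : Type*} [NormedAddCommGroup E] {v : ℝ → E} {α M C : ℝ}

theorem sq_norm_sub_div_rpow_le_memoryKernelMajorant
    (hbdd : ∀ t : ℝ, 0 ≤ t → ‖v t‖ ≤ M)
    (hHolder : ∀ t τ : ℝ, 0 ≤ t → 0 ≤ τ → ‖v t - v τ‖ ≤ C * |t - τ| ^ α)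
    {t s : ℝ} (hs : s ∈ Ioc 0 t) :
    ‖v t - v (t - s)‖ ^ 2 / s ^ (α + 1) ≤ memoryKernelMajorant α M C s := by
  obtain ⟨hs0, hst⟩ := hs
  have ht : 0 ≤ t := hs0.le.trans hst
  have hts : 0 ≤ t - s := sub_nonneg.2 hst
  rcases le_or_gt s 1 with hs1 | hs1
  · have hHolder_s : ‖v t - v (t - s)‖ ≤ C * s ^ α := by
      simpa [abs_of_pos hs0] using hHolder t (t - s) ht hts
    simpa [memoryKernelMajorant, hs0, hs1, not_lt.2 hs1]
      using sq_div_rpow_le_of_le_mul_rpow (norm_nonneg _) hs0 hHolder_s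
  · have hbdd_s : ‖v t - v (t - s)‖ ≤ 2 * M := by
      linarith [norm_sub_le (v t) (v (t - s)), hbdd t ht, hbdd (t - s) hts]
    simpa [memoryKernelMajorant, hs1, not_le.2 hs1]
      using sq_div_rpow_le_of_le (β := α + 1) (norm_nonneg _) hs0 hbdd_s

theorem continuousOn_sq_norm_sub_div_rpow (hcont : ContinuousOn v (Ici 0)) (t : ℝ) :
    ContinuousOn (fun s => ‖v t - v (t - s)‖ ^ 2 / s ^ (α + 1)) (Ioc 0 t) := by
  have hv : ContinuousOn (fun s => v (t - s)) (Ioc 0 t) :=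
    hcont.comp (continuousOn_const.sub continuousOn_id)
      fun s hs => sub_nonneg.2 hs.2
  refine ((continuousOn_const.sub hv).norm.pow 2).div
    (continuousOn_id.rpow_const fun s hs => Or.inl hs.1.ne') fun s hs => ?_
  exact (Real.rpow_pos_of_pos hs.1 _).ne'

theorem tendsto_integral_Ioc_sq_norm_sub_div_rpow {v_inf : E} (hα : 0 < α)
    (hcont : ContinuousOn v (Ici 0))
    (hbdd : ∀ t : ℝ, 0 ≤ t → ‖v t‖ ≤ M)
    (hHolder : ∀ t τ : ℝ, 0 ≤ t → 0 ≤ τ → ‖v t - v τ‖ ≤ C * |t - τ| ^ α)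
    (hlim : Tendsto v atTop (𝓝 v_inf)) :
    Tendsto (fun t => ∫ s in Ioc 0 t, ‖v t - v (t - s)‖ ^ 2 / s ^ (α + 1)) atTop (𝓝 0) := by
  set F : ℝ → ℝ → ℝ := fun t => (Ioc 0 t).indicator fun s => ‖v t - v (t - s)‖ ^ 2 / s ^ (α + 1)
  have hF_nonneg : ∀ t s, 0 ≤ F t s := fun t s =>
    indicator_nonneg (fun s hs => by have := hs.1; positivity) s
  have hF_meas : ∀ t, AEStronglyMeasurable (F t) :=
    fun t => (aestronglyMeasurable_indicator_iff measurableSet_Ioc).2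
      ((continuousOn_sq_norm_sub_div_rpow hcont t).aestronglyMeasurable measurableSet_Ioc)
  have hF_bound : ∀ t s, ‖F t s‖ ≤ memoryKernelMajorant α M C s := by
    intro t s
    rw [Real.norm_of_nonneg (hF_nonneg t s)]
    by_cases hs : s ∈ Ioc 0 t
    · simpa only [F, indicator_of_mem hs]
        using sq_norm_sub_div_rpow_le_memoryKernelMajorant hbdd hHolder hs
    · rw [show F t s = 0 from indicator_of_notMem hs _]
      exact memoryKernelMajorant_nonneg α M C s
  have hF_lim : ∀ s, Tendsto (fun t => F t s) atTop (𝓝 0) := by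
    intro s
    rcases le_or_gt s 0 with hs | hs
    · simp [F, hs.not_gt]
    · have hlim_s : Tendsto (fun t => ‖v t - v (t - s)‖ ^ 2 / s ^ (α + 1)) atTop (𝓝 0) := by
        simpa using ((hlim.sub_comp_sub_const s).norm.pow 2).div_const (s ^ (α + 1))
      refine hlim_s.congr' ?_
      filter_upwards [eventually_ge_atTop s] with t hst
      simp [F, hs, hst]
  have := tendsto_integral_filter_of_dominated_convergence (memoryKernelMajorant α M C)
    (.of_forall hF_meas) (.of_forall fun t => .of_forall (hF_bound t))
    (integrable_memoryKernelMajorant hα M C) (.of_forall hF_lim)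
  simpa only [F, integral_indicator measurableSet_Ioc, integral_zero] using this

end MemoryKernel

theorem memory_term_tendsto_zero_general
    {H : Type*} [NormedAddCommGroup H]
    (α M C : ℝ) (hα : α ∈ Set.Ioo (0:ℝ) 1)
    (v : ℝ → H) (v_inf : H)
    (hcont : ContinuousOn v (Set.Ici 0))
    (hbdd : ∀ t : ℝ, 0 ≤ t → ‖v t‖ ≤ M)
    (hHolder : ∀ t τ : ℝ, 0 ≤ t → 0 ≤ τ → ‖v t - v τ‖ ≤ C * |t - τ| ^ α)
    (hlim : Tendsto v atTop (nhds v_inf)) :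
    Tendsto (fun t : ℝ => ∫ τ in Set.Ioo (0:ℝ) t,
      ‖v t - v τ‖ ^ 2 / (t - τ) ^ (α + 1)) atTop (nhds 0) := by
  refine (tendsto_integral_Ioc_sq_norm_sub_div_rpow hα.1 hcont hbdd hHolder hlim).congr' ?_
  filter_upwards [eventually_ge_atTop 0] with t ht
  simpa only [sub_sub_cancel, sub_zero] using
    (setIntegral_Ioo_comp_sub_left (fun s => ‖v t - v (t - s)‖ ^ 2 / s ^ (α + 1)) ht).symm

theorem memory_term_tendsto_zero
    {H : Type*} [NormedAddCommGroup H] [InnerProductSpace ℝ H] [CompleteSpace H]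
    (α M C : ℝ) (hα : α ∈ Set.Ioo (0:ℝ) 1) (hM : 0 < M) (hC : 0 < C)
    (v : ℝ → H) (v_inf : H)
    (hcont : ContinuousOn v (Set.Ici 0))
    (hbdd : ∀ t : ℝ, 0 ≤ t → ‖v t‖ ≤ M)
    (hHolder : ∀ t τ : ℝ, 0 ≤ t → 0 ≤ τ → ‖v t - v τ‖ ≤ C * |t - τ| ^ α)
    (hlim : Tendsto v atTop (nhds v_inf)) :
    Tendsto (fun t : ℝ => ∫ τ in Set.Ioo (0:ℝ) t,
      ‖v t - v τ‖ ^ 2 / (t - τ) ^ (α + 1)) atTop (nhds 0) :=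
  memory_term_tendsto_zero_general α M C hα v v_inf hcont hbdd hHolder hlim
end

section
/- Let α ∈ (0,1) and c_j = −(1/2)(2-α)((j+1)^{1-α} + j^{1-α}) + (j+1)^{2-α} − j^{2-α} for j ≥ 1. Then c_j is positive and decreasing in j: c_j ≥ c_{j+1} > 0 for all j ≥ 1. -/
/-!
Up to the factor `2 - α`, `c_j` is the error `∫_j^{j+1} t^{1-α} dt - (j^{1-α} + (j+1)^{1-α})/2`
of the trapezoid rule for the strictly concave function `t^{1-α}`, hence positive. Viewed as a
function of a real variable `x`, its derivative is `(2 - α)(1 - α)` times the (negative) error of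
the trapezoid rule on `[x, x+1]` for the strictly convex function `t^{-α}`, so it decreases.
-/

open Set intervalIntegral

lemma integral_chord {a b : ℝ} (A B : ℝ) (hab : a ≠ b) :
    ∫ t in a..b, ((b - t) * A + (t - a) * B) / (b - a) = (b - a) * ((A + B) / 2) := by
  have hba : b - a ≠ 0 := sub_ne_zero.2 hab.symm
  have affine : ∀ t, ((b - t) * A + (t - a) * B) / (b - a)
      = (b * A - a * B) / (b - a) + (B - A) / (b - a) * t := by
    intro t; field_simp; ring
  simp only [affine]
  rw [integral_add intervalIntegrable_const
      ((by fun_prop : Continuous fun t : ℝ ↦ (B - A) / (b - a) * t).intervalIntegrable a b),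
    integral_const, integral_const_mul, integral_id, smul_eq_mul]
  field_simp
  ring

theorem StrictConvexOn.integral_lt_trapezoid {f : ℝ → ℝ} {a b : ℝ} (hab : a < b)
    (hf : StrictConvexOn ℝ (Icc a b) f) (hfc : ContinuousOn f (Icc a b)) :
    ∫ t in a..b, f t < (b - a) * ((f a + f b) / 2) := by
  have hba : 0 < b - a := sub_pos.2 hab
  have below_chord : ∀ t ∈ Ioo a b, f t < ((b - t) * f a + (t - a) * f b) / (b - a) := by
    intro t ⟨hat, htb⟩
    have h := hf.2 (left_mem_Icc.2 hab.le) (right_mem_Icc.2 hab.le) hab.ne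
      (div_pos (sub_pos.2 htb) hba) (div_pos (sub_pos.2 hat) hba) (by field_simp; ring)
    have ht : ((b - t) / (b - a)) • a + ((t - a) / (b - a)) • b = t := by
      simp only [smul_eq_mul]; field_simp; ring
    rw [ht] at h
    simp only [smul_eq_mul] at h
    exact h.trans_eq (by ring)
  rw [← integral_chord _ _ hab.ne]
  refine integral_lt_integral_of_continuousOn_of_le_of_exists_lt hab hfc (by fun_prop)
    (fun t ht ↦ ?_)
    ⟨(a + b) / 2, ⟨by linarith, by linarith⟩, below_chord _ ⟨by linarith, by linarith⟩⟩
  rcases ht.2.lt_or_eq with htb | rfl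
  · exact (below_chord t ⟨ht.1, htb⟩).le
  · field_simp; simp

theorem StrictConcaveOn.trapezoid_lt_integral {f : ℝ → ℝ} {a b : ℝ} (hab : a < b)
    (hf : StrictConcaveOn ℝ (Icc a b) f) (hfc : ContinuousOn f (Icc a b)) :
    (b - a) * ((f a + f b) / 2) < ∫ t in a..b, f t := by
  have h := hf.neg.integral_lt_trapezoid hab hfc.neg
  simp only [Pi.neg_apply, integral_neg] at h
  linarith

theorem strictConvexOn_rpow_of_neg {q : ℝ} (hq : q < 0) :
    StrictConvexOn ℝ (Ioi 0) fun x : ℝ ↦ x ^ q := by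
  refine StrictMonoOn.strictConvexOn_of_deriv (convex_Ioi 0)
    (fun x hx ↦ (Real.continuousAt_rpow_const x q (.inl (ne_of_gt hx))).continuousWithinAt) ?_
  rw [interior_Ioi]
  intro x hx y hy hxy
  simp only [Real.deriv_rpow_const]
  exact mul_lt_mul_of_neg_left
    (Real.strictAntiOn_rpow_Ioi_of_exponent_neg (by linarith) hx hy hxy) hq

theorem trapezoid_lt_add_one_rpow_sub_rpow {p x : ℝ} (hp₀ : 0 < p) (hp₁ : p < 1) (hx : 0 ≤ x) :
    (p + 1) * ((x ^ p + (x + 1) ^ p) / 2) < (x + 1) ^ (p + 1) - x ^ (p + 1) := by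
  have hIcc : Icc x (x + 1) ⊆ Ici 0 := Icc_subset_Ici_self.trans (Ici_subset_Ici.2 hx)
  have h := ((Real.strictConcaveOn_rpow hp₀ hp₁).subset hIcc (convex_Icc x (x + 1))
    ).trapezoid_lt_integral (lt_add_one x) (Real.continuous_rpow_const hp₀.le).continuousOn
  rw [integral_rpow (.inl (by linarith)), add_sub_cancel_left, one_mul,
    lt_div_iff₀ (by linarith)] at h
  linarith

theorem add_one_rpow_sub_rpow_lt_trapezoid {q x : ℝ} (hq₀ : -1 < q) (hq₁ : q < 0) (hx : 0 < x) :
    (x + 1) ^ (q + 1) - x ^ (q + 1) < (q + 1) * ((x ^ q + (x + 1) ^ q) / 2) := by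
  have hIcc : Icc x (x + 1) ⊆ Ioi 0 := fun t ht ↦ hx.trans_le ht.1
  have h := ((strictConvexOn_rpow_of_neg hq₁).subset hIcc (convex_Icc x (x + 1))
    ).integral_lt_trapezoid (lt_add_one x) fun t ht ↦
      (Real.continuousAt_rpow_const t q (.inl (ne_of_gt (hIcc ht)))).continuousWithinAt
  rw [integral_rpow (.inl hq₀), add_sub_cancel_left, one_mul,
    div_lt_iff₀ (by linarith)] at h
  linarith

noncomputable def l2Coeff (α x : ℝ) : ℝ :=
  -(1/2) * (2-α) * ((x+1) ^ (1-α) + x ^ (1-α)) + (x+1) ^ (2-α) - x ^ (2-α)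

theorem l2Coeff_pos {α x : ℝ} (hα : α ∈ Ioo (0:ℝ) 1) (hx : 0 ≤ x) : 0 < l2Coeff α x := by
  have h := trapezoid_lt_add_one_rpow_sub_rpow (p := 1 - α)
    (by linarith [hα.2]) (by linarith [hα.1]) hx
  rw [show 1 - α + 1 = 2 - α by ring] at h
  unfold l2Coeff
  linarith

theorem hasDerivAt_l2Coeff (α : ℝ) {x : ℝ} (hx : 0 < x) :
    HasDerivAt (l2Coeff α) ((2 - α) * ((x + 1) ^ (1 - α) - x ^ (1 - α)
      - (1 - α) * ((x ^ (-α) + (x + 1) ^ (-α)) / 2))) x := by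
  have hpow : ∀ (p : ℝ) {y : ℝ}, 0 < y → HasDerivAt (fun x : ℝ ↦ x ^ p) (p * y ^ (p - 1)) y :=
    fun _ _ hy ↦ Real.hasDerivAt_rpow_const (.inl hy.ne')
  have hpow' : ∀ p : ℝ, HasDerivAt (fun x : ℝ ↦ (x + 1) ^ p) (p * (x + 1) ^ (p - 1)) x :=
    fun p ↦ by simpa using (hpow p (by linarith : 0 < x + 1)).comp_add_const x 1
  have h := ((((hpow' (1 - α)).add (hpow (1 - α) hx)).const_mul (-(1/2) * (2 - α))).add
    (hpow' (2 - α))).sub (hpow (2 - α) hx)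
  refine h.congr_deriv ?_
  rw [show 1 - α - 1 = -α by ring, show 2 - α - 1 = 1 - α by ring]
  ring

theorem strictAntiOn_l2Coeff {α : ℝ} (hα : α ∈ Ioo (0:ℝ) 1) :
    StrictAntiOn (l2Coeff α) (Ici 0) := by
  have hcont : Continuous (l2Coeff α) := by
    have h₁ := Real.continuous_rpow_const (q := 1 - α) (by linarith [hα.2])
    have h₂ := Real.continuous_rpow_const (q := 2 - α) (by linarith [hα.2])
    unfold l2Coeff
    fun_prop
  refine strictAntiOn_of_deriv_neg (convex_Ici 0) hcont.continuousOn fun x hx ↦ ?_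
  rw [interior_Ici] at hx
  rw [(hasDerivAt_l2Coeff α hx).deriv]
  have h := add_one_rpow_sub_rpow_lt_trapezoid (q := -α)
    (by linarith [hα.2]) (by linarith [hα.1]) hx
  rw [show -α + 1 = 1 - α by ring] at h
  exact mul_neg_of_pos_of_neg (by linarith [hα.2]) (by linarith)

theorem L2_c_coefficients_positive_decreasing
    (α : ℝ) (hα : α ∈ Set.Ioo (0:ℝ) 1) (c : ℕ → ℝ)
    (hc : ∀ j : ℕ, 1 ≤ j → c j = -(1/2) * (2-α) * (((j:ℝ)+1) ^ (1-α) + (j:ℝ) ^ (1-α))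
        + ((j:ℝ)+1) ^ (2-α) - (j:ℝ) ^ (2-α)) :
    ∀ j : ℕ, 1 ≤ j → c j ≥ c (j+1) ∧ c (j+1) > 0 := by
  intro j hj
  have hcj : c j = l2Coeff α j := hc j hj
  have hcj' : c (j + 1) = l2Coeff α (j + 1) := by
    rw [hc (j + 1) (by omega)]; push_cast; rfl
  rw [hcj, hcj']
  exact ⟨(strictAntiOn_l2Coeff hα).antitoneOn (by simp) (by simp; positivity) (by simp),
    l2Coeff_pos hα (by positivity)⟩
end

section
/- Let α ∈ (0,1) and r₁ = 2 + α/2 − (α/2 + 1)·2^{1-α}. Then r₁ > 0. -/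
/-!
Multiplying by `2 ^ α`, the claim becomes `2 (α + 2) < (4 + α) 2 ^ α`. The tangent line of
`2 ^ α = exp (α log 2)` at `0` gives `2 ^ α > 1 + α log 2 > 1 + α / 2`, and
`(4 + α)(1 + α / 2) = 4 + 3α + α² / 2` already exceeds `2 (α + 2)`.
-/

open Real

lemma one_add_mul_log_lt_rpow {b x : ℝ} (hb : 0 < b) (h : x * log b ≠ 0) :
    1 + x * log b < b ^ x := by
  rw [rpow_def_of_pos hb, mul_comm (log b)]
  linarith [add_one_lt_exp h]

lemma two_mul_add_two_lt_mul_two_rpow {α : ℝ} (hα : 0 < α) :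
    2 * (α + 2) < (4 + α) * (2 : ℝ) ^ α := by
  have hlog : (1 : ℝ) / 2 < log 2 := by linarith [log_two_gt_d9]
  have htangent : 1 + α * log 2 < (2 : ℝ) ^ α :=
    one_add_mul_log_lt_rpow two_pos (by positivity)
  calc 2 * (α + 2) < (4 + α) * (1 + α / 2) := by nlinarith
    _ ≤ (4 + α) * (1 + α * log 2) := by gcongr; nlinarith
    _ < (4 + α) * (2 : ℝ) ^ α := by gcongr

theorem r1_positive (α : ℝ) (hα : α ∈ Set.Ioo (0:ℝ) 1) :
    0 < 2 + α/2 - (α/2 + 1) * (2:ℝ) ^ (1-α) := by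
  have hpow : (0 : ℝ) < 2 ^ α := rpow_pos_of_pos two_pos α
  rw [rpow_sub two_pos, rpow_one, sub_pos, ← mul_div_assoc, div_lt_iff₀ hpow]
  linarith [two_mul_add_two_lt_mul_two_rpow hα.1]
end
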